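/- There exist no three-player impartial games X and Y such that X and Y are both P-games and X + Y is an O-game. -/
import Mathlib


/-- Three-player impartial games: well-founded game trees. -/
inductive G3 : Type 1 where
  | mk : (ι : Type) → (ι → G3) → G3

namespace G3

/-- The index type of options (moves) of a game. -/
def moves : G3 → Type
  | mk ι _ => ι

/-- The option of a game corresponding to a move. -/
def moveFn : (g : G3) → moves g → G3
  | mk _ f => f

/-- Disjunctive sum: move in exactly one component. -/
noncomputable def add : G3 → G3 → G3 :=
  G3.rec (fun ι f ihf =>
    G3.rec (fun κ g ihg =>
      mk (ι ⊕ κ) (fun x =>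
        match x with
        | Sum.inl i => ihf i (mk κ g)
        | Sum.inr j => ihg j)))

/-- The four outcome types of a three-player impartial game. -/
inductive PType : Type
  | N | O | P | Q
deriving DecidableEq

open Classical in
/-- The type of a game: `N` iff some option is a `P`-game; `O` iff it has at least
one option and all options are `N`-games; `P` iff all options are `O`-games;
`Q` otherwise. -/
noncomputable def typ : G3 → PType
  | mk ι f =>
    if ∃ i, typ (f i) = PType.P then PType.N
    else if Nonempty ι ∧ ∀ i, typ (f i) = PType.N then PType.O
    else if ∀ i, typ (f i) = PType.O then PType.P
    else PType.Q

/-- The Nim heap of size `n`: options are heaps of sizes `0, …, n-1`. -/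
def nim : ℕ → G3
  | n => mk (Fin n) (fun i => nim i)
termination_by n => n
decreasing_by exact i.isLt

/-- The sum of `n` Nim heaps of size 1. -/
noncomputable def ones : ℕ → G3
  | 0 => nim 0
  | n + 1 => add (ones n) (nim 1)

theorem add_mk (ι κ : Type) (f : ι → G3) (g : κ → G3) :
    add (mk ι f) (mk κ g) = mk (ι ⊕ κ) (fun x =>
      match x with
      | Sum.inl i => add (f i) (mk κ g)
      | Sum.inr j => add (mk ι f) (g j)) := rfl

open Classical in
theorem typ_mk (ι : Type) (f : ι → G3) :
    typ (mk ι f) =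
      if ∃ i, typ (f i) = PType.P then PType.N
      else if Nonempty ι ∧ ∀ i, typ (f i) = PType.N then PType.O
      else if ∀ i, typ (f i) = PType.O then PType.P
      else PType.Q := by
  rw [typ]

theorem typ_N' {ι : Type} {f : ι → G3} (h : typ (mk ι f) = PType.N) :
    ∃ i, typ (f i) = PType.P := by
  rw [typ_mk] at h; split_ifs at h with h1 h2 h3 <;> first | exact h1 | simp_all

theorem typ_O' {ι : Type} {f : ι → G3} (h : typ (mk ι f) = PType.O) :
    Nonempty ι ∧ ∀ i, typ (f i) = PType.N := by
  rw [typ_mk] at h; split_ifs at h with h1 h2 h3 <;> first | exact h2 | simp_all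

theorem typ_P' {ι : Type} {f : ι → G3} (h : typ (mk ι f) = PType.P) :
    ∀ i, typ (f i) = PType.O := by
  rw [typ_mk] at h; split_ifs at h with h1 h2 h3 <;> first | exact h3 | simp_all

def Stmt (X Y : G3) : Prop :=
  (typ X = .P → typ Y = .P → typ (add X Y) ≠ .O) ∧
  (typ X = .N → typ Y = .P → typ (add X Y) ≠ .P) ∧
  (typ X = .P → typ Y = .N → typ (add X Y) ≠ .P) ∧
  (typ X = .O → typ Y = .O → typ (add X Y) ≠ .P) ∧
  (typ X = .N → typ Y = .O → typ (add X Y) ≠ .O) ∧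
  (typ X = .O → typ Y = .N → typ (add X Y) ≠ .O) ∧
  (typ X = .P → typ Y = .O → typ (add X Y) ≠ .N) ∧
  (typ X = .O → typ Y = .P → typ (add X Y) ≠ .N)

theorem stmt : ∀ X Y : G3, Stmt X Y := by
  intro X
  induction X with
  | mk ι f ihf =>
    intro Y
    induction Y with
    | mk κ g ihg =>
      refine ⟨?_, ?_, ?_, ?_, ?_, ?_, ?_, ?_⟩ <;> intro hX hY hS <;> rw [add_mk] at hS
      · obtain ⟨⟨x⟩, hall⟩ := typ_O' hS
        cases x with
        | inl i => exact (ihf i (mk κ g)).2.2.2.2.2.2.2 (typ_P' hX i) hY (hall (Sum.inl i))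
        | inr j => exact (ihg j).2.2.2.2.2.2.1 hX (typ_P' hY j) (hall (Sum.inr j))
      · obtain ⟨i, hi⟩ := typ_N' hX
        exact (ihf i (mk κ g)).1 hi hY (typ_P' hS (Sum.inl i))
      · obtain ⟨j, hj⟩ := typ_N' hY
        exact (ihg j).1 hX hj (typ_P' hS (Sum.inr j))
      · obtain ⟨⟨i⟩, hN⟩ := typ_O' hX
        exact (ihf i (mk κ g)).2.2.2.2.1 (hN i) hY (typ_P' hS (Sum.inl i))
      · obtain ⟨i, hi⟩ := typ_N' hX
        obtain ⟨-, hall⟩ := typ_O' hS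
        exact (ihf i (mk κ g)).2.2.2.2.2.2.1 hi hY (hall (Sum.inl i))
      · obtain ⟨j, hj⟩ := typ_N' hY
        obtain ⟨-, hall⟩ := typ_O' hS
        exact (ihg j).2.2.2.2.2.2.2 hX hj (hall (Sum.inr j))
      · obtain ⟨x, hx⟩ := typ_N' hS
        cases x with
        | inl i => exact (ihf i (mk κ g)).2.2.2.1 (typ_P' hX i) hY hx
        | inr j => exact (ihg j).2.2.1 hX ((typ_O' hY).2 j) hx
      · obtain ⟨x, hx⟩ := typ_N' hS
        cases x with
        | inl i => exact (ihf i (mk κ g)).2.1 ((typ_O' hX).2 i) hY hx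
        | inr j => exact (ihg j).2.2.2.1 hX (typ_P' hY j) hx

theorem no_P_plus_P_eq_O :
    ¬ ∃ X Y : G3, typ X = PType.P ∧ typ Y = PType.P ∧ typ (add X Y) = PType.O := by
  rintro ⟨X, Y, hX, hY, hS⟩
  exact (stmt X Y).1 hX hY hS

end G3
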